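/- arXiv:1201.5949 — 3 statements merged into one kernel-verified Lean document; each statement's English description precedes it below -/
import Mathlib

section
/- Let α > 0, let p ≠ q be integers, and set λ₁ = (α - 2q)/(2(p - q)) and λ₂ = (2p - α)/(2(p - q)). Define W_r(z) = ((1 - e^{-z})/z)^α · e^{rz} for nonzero complex z. Then λ₁ W_p(z) + λ₂ W_q(z) = 1 + O(z²) as z → 0; that is, there exist constants C > 0 and δ > 0 such that |λ₁ W_p(z) + λ₂ W_q(z) - 1| ≤ C|z|² for all complex z with 0 < |z| < δ. -/
/-!
Write `B(z) = (1 - e^{-z}) / z`, extended analytically by `B 0 = 1`. The function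
`G = B^α (λ₁ e^{pz} + λ₂ e^{qz})` is analytic at `0` with `G 0 = λ₁ + λ₂ = 1` and, since
`B'(0) = -1/2`, `G'(0) = λ₁ p + λ₂ q - α/2 = 0`. An analytic function whose derivative vanishes at
`c` differs from its value at `c` by `(z - c)^2` times a continuous factor (apply `dslope` twice),
which is bounded near `c`.
-/

open Complex Filter Topology Asymptotics

section Dslope

variable {𝕜 E : Type*} [NontriviallyNormedField 𝕜] [NormedAddCommGroup E] [NormedSpace 𝕜 E]
  {f : 𝕜 → E} {c : 𝕜}

theorem analyticAt_dslope_same (hf : AnalyticAt 𝕜 f c) : AnalyticAt 𝕜 (dslope f c) c :=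
  let ⟨_, hp⟩ := hf
  hp.has_fpower_series_dslope_fslope.analyticAt

theorem AnalyticAt.isBigO_sub_sq_of_deriv_eq_zero (hf : AnalyticAt 𝕜 f c) (hd : deriv f c = 0) :
    (fun z => f z - f c) =O[𝓝 c] fun z => (z - c) ^ 2 := by
  have hg : dslope f c c = 0 := by rw [dslope_same, hd]
  have hfactor : ∀ z, f z - f c = (z - c) ^ 2 • dslope (dslope f c) c z := fun z => by
    rw [sq, mul_smul, sub_smul_dslope_of_zero hg, sub_smul_dslope]
  simp only [hfactor]
  have hbdd := (analyticAt_dslope_same (analyticAt_dslope_same hf)).continuousAt.isBigO_one 𝕜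
  exact ((isBigO_refl (fun z => (z - c) ^ 2) (𝓝 c)).smul hbdd).trans
    (isBigO_of_le _ fun z => by simp)

end Dslope

theorem Complex.differentiable_dslope {E : Type*} [NormedAddCommGroup E] [NormedSpace ℂ E]
    [CompleteSpace E] {f : ℂ → E} (hf : Differentiable ℂ f) (c : ℂ) :
    Differentiable ℂ (dslope f c) := fun z =>
  ((differentiableOn_dslope univ_mem).2 hf.differentiableOn z trivial).differentiableAt univ_mem

/-- Differentiate `f z - f c = (z - c) * dslope f c z` twice and evaluate at `c`. -/
theorem Complex.deriv_dslope_same {f : ℂ → ℂ} (hf : Differentiable ℂ f) (c : ℂ) :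
    deriv (dslope f c) c = deriv (deriv f) c / 2 := by
  set g := dslope f c
  have hg : Differentiable ℂ g := differentiable_dslope hf c
  have hderiv : deriv f = fun z => g z + (z - c) * deriv g z := funext fun z => by
    have hprod : HasDerivAt (fun z => (z - c) * g z) (1 * g z + (z - c) * deriv g z) z :=
      ((hasDerivAt_id z).sub_const c).mul (hg z).hasDerivAt
    have hfz : (fun z => (z - c) * g z) = fun z => f z - f c := funext (sub_smul_dslope f c)
    rw [hfz, hasDerivAt_sub_const_iff, one_mul] at hprod
    exact hprod.deriv
  have h2 : HasDerivAt (deriv f) (deriv g c + deriv g c) c := by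
    rw [hderiv]
    exact ((hg c).hasDerivAt.add
      (((hasDerivAt_id c).sub_const c).mul (hg.deriv c).hasDerivAt)).congr_deriv (by simp)
  rw [h2.deriv]
  ring

theorem Asymptotics.IsBigO.exists_pos_bound_of_dist_lt {α E F : Type*} [PseudoMetricSpace α]
    [Norm E] [SeminormedAddCommGroup F] {f : α → E} {g : α → F} {c : α} (h : f =O[𝓝 c] g) :
    ∃ C > 0, ∃ δ > 0, ∀ x, dist x c < δ → ‖f x‖ ≤ C * ‖g x‖ := by
  obtain ⟨C, hC, hCf⟩ := h.exists_pos
  obtain ⟨δ, hδ, hball⟩ := Metric.eventually_nhds_iff.1 hCf.bound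
  exact ⟨C, hC, δ, hδ, fun _ hx => hball hx⟩

noncomputable def oneSubExpNegDiv : ℂ → ℂ := dslope (fun z => 1 - exp (-z)) 0

theorem hasDerivAt_one_sub_exp_neg (z : ℂ) : HasDerivAt (fun z => 1 - exp (-z)) (exp (-z)) z := by
  simpa using ((hasDerivAt_neg z).cexp).const_sub 1

theorem differentiable_oneSubExpNegDiv : Differentiable ℂ oneSubExpNegDiv :=
  differentiable_dslope (fun z => (hasDerivAt_one_sub_exp_neg z).differentiableAt) 0

theorem oneSubExpNegDiv_zero : oneSubExpNegDiv 0 = 1 := by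
  rw [oneSubExpNegDiv, dslope_same, (hasDerivAt_one_sub_exp_neg 0).deriv, neg_zero, exp_zero]

theorem oneSubExpNegDiv_of_ne_zero {z : ℂ} (hz : z ≠ 0) :
    oneSubExpNegDiv z = (1 - exp (-z)) / z := by
  simp [oneSubExpNegDiv, dslope_of_ne _ hz, slope_def_field]

theorem deriv_oneSubExpNegDiv_zero : deriv oneSubExpNegDiv 0 = -1 / 2 := by
  have hderiv : deriv (fun z => 1 - exp (-z)) = fun z => exp (-z) :=
    funext fun z => (hasDerivAt_one_sub_exp_neg z).deriv
  have h2 : deriv (fun z : ℂ => exp (-z)) 0 = -1 := by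
    simpa using ((hasDerivAt_neg (0 : ℂ)).cexp).deriv
  rw [oneSubExpNegDiv, deriv_dslope_same (fun z => (hasDerivAt_one_sub_exp_neg z).differentiableAt),
    hderiv, h2]

noncomputable def weightedSymbol (α w₁ w₂ p q z : ℂ) : ℂ :=
  oneSubExpNegDiv z ^ α * (w₁ * exp (p * z) + w₂ * exp (q * z))

theorem oneSubExpNegDiv_zero_mem_slitPlane : oneSubExpNegDiv 0 ∈ slitPlane := by
  rw [oneSubExpNegDiv_zero]; exact one_mem_slitPlane

theorem weightedSymbol_zero (α w₁ w₂ p q : ℂ) : weightedSymbol α w₁ w₂ p q 0 = w₁ + w₂ := by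
  simp [weightedSymbol, oneSubExpNegDiv_zero]

theorem analyticAt_weightedSymbol_zero (α w₁ w₂ p q : ℂ) :
    AnalyticAt ℂ (weightedSymbol α w₁ w₂ p q) 0 := by
  have hB : AnalyticAt ℂ oneSubExpNegDiv 0 := differentiable_oneSubExpNegDiv.analyticAt 0
  unfold weightedSymbol
  fun_prop (disch := exact oneSubExpNegDiv_zero_mem_slitPlane)

theorem hasDerivAt_weightedSymbol_zero (α w₁ w₂ p q : ℂ) :
    HasDerivAt (weightedSymbol α w₁ w₂ p q) (w₁ * p + w₂ * q - α / 2 * (w₁ + w₂)) 0 := by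
  have hpow := (differentiable_oneSubExpNegDiv 0).hasDerivAt.cpow_const (c := α)
    oneSubExpNegDiv_zero_mem_slitPlane
  have hexp : ∀ r : ℂ, HasDerivAt (fun z => exp (r * z)) r 0 := fun r => by
    simpa using ((hasDerivAt_id (0 : ℂ)).const_mul r).cexp
  refine (hpow.mul (((hexp p).const_mul w₁).add ((hexp q).const_mul w₂))).congr_deriv ?_
  rw [deriv_oneSubExpNegDiv_zero, oneSubExpNegDiv_zero, one_cpow, one_cpow]
  simp only [Pi.add_apply, mul_zero, exp_zero, mul_one]
  ring

theorem WSGD_symbol_expansion_general (α : ℝ) (p q : ℤ) (hpq : p ≠ q)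
    (l1 l2 : ℝ)
    (hl1 : l1 = (α - 2 * (q : ℝ)) / (2 * ((p : ℝ) - (q : ℝ))))
    (hl2 : l2 = (2 * (p : ℝ) - α) / (2 * ((p : ℝ) - (q : ℝ)))) :
    ∃ C > (0 : ℝ), ∃ δ > (0 : ℝ), ∀ z : ℂ, z ≠ 0 → ‖z‖ < δ →
      ‖(l1 : ℂ) * (((1 - Complex.exp (-z)) / z) ^ (α : ℂ) * Complex.exp ((p : ℂ) * z))
          + (l2 : ℂ) * (((1 - Complex.exp (-z)) / z) ^ (α : ℂ) * Complex.exp ((q : ℂ) * z)) - 1‖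
        ≤ C * ‖z‖ ^ 2 := by
  have hpq' : (p : ℝ) - q ≠ 0 := sub_ne_zero.2 (Int.cast_injective.ne hpq)
  have hsum : l1 + l2 = 1 := by rw [hl1, hl2]; field_simp; ring
  have hmean : l1 * p + l2 * q = α / 2 * (l1 + l2) := by rw [hl1, hl2]; field_simp; ring
  have hderiv0 : deriv (weightedSymbol α l1 l2 p q) 0 = 0 := by
    rw [(hasDerivAt_weightedSymbol_zero ..).deriv, sub_eq_zero]
    exact_mod_cast hmean
  obtain ⟨C, hC, δ, hδ, hbound⟩ := ((analyticAt_weightedSymbol_zero ..).isBigO_sub_sq_of_deriv_eq_zero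
    hderiv0).exists_pos_bound_of_dist_lt
  refine ⟨C, hC, δ, hδ, fun z hz hzδ => ?_⟩
  have hGz := hbound z (by rwa [dist_zero_right])
  rw [weightedSymbol_zero, ← ofReal_add, hsum, ofReal_one, sub_zero, norm_pow] at hGz
  rwa [weightedSymbol, oneSubExpNegDiv_of_ne_zero hz, mul_add, mul_left_comm _ (l1 : ℂ),
    mul_left_comm _ (l2 : ℂ)] at hGz

theorem WSGD_symbol_expansion (α : ℝ) (hα : 0 < α) (p q : ℤ) (hpq : p ≠ q)
    (l1 l2 : ℝ)
    (hl1 : l1 = (α - 2 * (q : ℝ)) / (2 * ((p : ℝ) - (q : ℝ))))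
    (hl2 : l2 = (2 * (p : ℝ) - α) / (2 * ((p : ℝ) - (q : ℝ)))) :
    ∃ C > (0 : ℝ), ∃ δ > (0 : ℝ), ∀ z : ℂ, z ≠ 0 → ‖z‖ < δ →
      ‖(l1 : ℂ) * (((1 - Complex.exp (-z)) / z) ^ (α : ℂ) * Complex.exp ((p : ℂ) * z))
          + (l2 : ℂ) * (((1 - Complex.exp (-z)) / z) ^ (α : ℂ) * Complex.exp ((q : ℂ) * z)) - 1‖
        ≤ C * ‖z‖ ^ 2 :=
  WSGD_symbol_expansion_general α p q hpq l1 l2 hl1 hl2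
end

section
/- Let α > 0, let p ≠ q be integers, and set λ₁ = (α - 2q)/(2(p - q)) and λ₂ = (2p - α)/(2(p - q)). Then there exists a constant C > 0 such that for every real θ, | λ₁ (1 - e^{-iθ})^α e^{ipθ} + λ₂ (1 - e^{-iθ})^α e^{iqθ} - (iθ)^α | ≤ C |θ|^{α+2}. (This is the Fourier-multiplier form of the statement that the weighted and shifted Grünwald difference operator λ₁ A_{h,p}^α + λ₂ A_{h,q}^α approximates the left Riemann–Liouville derivative of order α with second-order accuracy.) -/
/-!
Put `w = iθ` and `r(w) = (1 - e^{-w}) / w`, so that `1 - e^{-w} = w r(w)`. For small real `θ ≠ 0`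
the factor `w` is purely imaginary and `r(w)` is close to `1`, so the principal branch splits
`(w r)^α = w^α r^α` and the error is `w^α ((λ₁ e^{pw} + λ₂ e^{qw}) r^α - 1)`. With
`v = α log r = -αw/2 + O(w²)`, the conditions `λ₁ + λ₂ = 1` and `λ₁ p + λ₂ q = α/2` turn the bracket
into `λ₁ (e^{pw+v} - 1 - (pw+v)) + λ₂ (e^{qw+v} - 1 - (qw+v)) + α (log r + w/2)`, which is
`O(w²)`. Away from `θ = 0` the error is at most `(|λ₁| + |λ₂|) 2^α + |θ|^α = O(|θ|^{α+2})`.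
-/

open Complex Asymptotics Filter Topology

namespace Complex

theorem exp_sub_sum_range_isBigO {n : ℕ} (hn : 0 < n) :
    (fun z : ℂ => exp z - ∑ m ∈ Finset.range n, z ^ m / m.factorial) =O[𝓝 0] (· ^ n) := by
  refine IsBigO.of_bound ((n.succ : ℝ) * (n.factorial * n : ℝ)⁻¹) ?_
  filter_upwards [Metric.closedBall_mem_nhds (0 : ℂ) one_pos] with z hz
  rw [norm_pow, mul_comm]
  exact exp_bound (mem_closedBall_zero_iff.mp hz) hn

theorem exp_sub_one_sub_isBigO : (fun z : ℂ => exp z - 1 - z) =O[𝓝 0] (· ^ 2) := by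
  convert exp_sub_sum_range_isBigO (n := 2) (by norm_num) using 2 with z
  simp [Finset.sum_range_succ, sub_sub]

theorem mul_cpow_of_re_nonneg_of_re_pos {x y : ℂ} (hx : 0 ≤ x.re) (hy : 0 < y.re) (a : ℂ) :
    (x * y) ^ a = x ^ a * y ^ a := by
  have hy0 : y ≠ 0 := fun h => by simp [h] at hy
  rcases eq_or_ne x 0 with rfl | hx0
  · rcases eq_or_ne a 0 with rfl | ha <;> simp [*]
  have hargx := abs_le.mp (abs_arg_le_pi_div_two_iff.mpr hx)
  have hargy := abs_lt.mp (abs_arg_lt_pi_div_two_iff.mpr (Or.inl hy))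
  rw [cpow_def_of_ne_zero (mul_ne_zero hx0 hy0), cpow_def_of_ne_zero hx0, cpow_def_of_ne_zero hy0,
    log_mul hx0 hy0 ⟨by linarith [Real.pi_pos], by linarith [Real.pi_pos]⟩, add_mul, exp_add]

end Complex

namespace Asymptotics

variable {α : Type*} {l : Filter α} {f g : α → ℂ}

theorem IsBigO.exp_sub_one_sub (hf : f =O[l] g) (hg : Tendsto g l (𝓝 0)) :
    (fun x => exp (f x) - 1 - f x) =O[l] fun x => g x ^ 2 :=
  (Complex.exp_sub_one_sub_isBigO.comp_tendsto (hf.trans_tendsto hg)).trans (hf.pow 2)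

theorem IsBigO.log_one_add_sub (hf : f =O[l] g) (hg : Tendsto g l (𝓝 0)) :
    (fun x => log (1 + f x) - f x) =O[l] fun x => g x ^ 2 :=
  (Complex.log_sub_self_isBigO.comp_tendsto (hf.trans_tendsto hg)).trans (hf.pow 2)

end Asymptotics

/-- Equals `0` at `w = 0` (division by zero), so its asymptotics are taken along `𝓝[≠] 0`. -/
noncomputable def gruenwaldRatio (w : ℂ) : ℂ := (1 - exp (-w)) / w

theorem gruenwaldRatio_sub_isBigO :
    (fun w => gruenwaldRatio w - (1 - w / 2)) =O[𝓝[≠] 0] (· ^ 2) := by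
  have h3 : (fun w : ℂ => exp (-w) - (1 - w + w ^ 2 / 2)) =O[𝓝 0] (· ^ 3) := by
    have := (exp_sub_sum_range_isBigO (n := 3) (by norm_num)).comp_tendsto
      ((continuous_neg.tendsto' (0 : ℂ) 0 neg_zero))
    refine (this.congr_left fun w => ?_).trans (isBigO_of_le _ fun w => by simp [norm_pow])
    simp only [Function.comp_apply, Finset.sum_range_succ, Finset.sum_range_zero]
    norm_num [Nat.factorial]
    ring
  refine ((h3.mono nhdsWithin_le_nhds).mul (isBigO_refl (fun w : ℂ => w⁻¹) _)).neg_left.congr'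
    ?_ ?_
  · filter_upwards [self_mem_nhdsWithin] with w (hw : w ≠ 0)
    rw [gruenwaldRatio]
    field_simp
    ring
  · filter_upwards [self_mem_nhdsWithin] with w (hw : w ≠ 0)
    field_simp

theorem tendsto_gruenwaldRatio : Tendsto gruenwaldRatio (𝓝[≠] 0) (𝓝 1) := by
  have h0 := gruenwaldRatio_sub_isBigO.trans_tendsto
    (((continuous_pow 2).tendsto' (0 : ℂ) 0 (by simp)).mono_left nhdsWithin_le_nhds)
  have h1 : Tendsto (fun w : ℂ => 1 - w / 2) (𝓝[≠] 0) (𝓝 1) :=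
    ((by fun_prop : Continuous fun w : ℂ => 1 - w / 2).tendsto' 0 1 (by simp)).mono_left
      nhdsWithin_le_nhds
  simpa using h0.add h1

theorem gruenwaldRatio_sub_one_isBigO :
    (fun w => gruenwaldRatio w - 1) =O[𝓝[≠] 0] fun w => w := by
  refine (gruenwaldRatio_sub_isBigO.trans ((isLittleO_pow_id one_lt_two).isBigO.mono
    nhdsWithin_le_nhds)).sub ((isBigO_refl (fun w : ℂ => w) _).const_mul_left (1 / 2))
    |>.congr_left fun w => ?_
  ring

theorem log_gruenwaldRatio_add_isBigO :
    (fun w => log (gruenwaldRatio w) + w / 2) =O[𝓝[≠] 0] (· ^ 2) := by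
  refine ((gruenwaldRatio_sub_one_isBigO.log_one_add_sub
    (tendsto_id.mono_left nhdsWithin_le_nhds)).add gruenwaldRatio_sub_isBigO).congr_left fun w => ?_
  rw [add_sub_cancel]
  ring

theorem weighted_gruenwald_symbol_sub_one_isBigO {l₁ l₂ p q a : ℂ} (hsum : l₁ + l₂ = 1)
    (hmom : l₁ * p + l₂ * q = a / 2) :
    (fun w => (l₁ * exp (p * w) + l₂ * exp (q * w)) * gruenwaldRatio w ^ a - 1)
      =O[𝓝[≠] 0] (· ^ 2) := by
  have hid : Tendsto (fun w : ℂ => w) (𝓝[≠] 0) (𝓝 0) := tendsto_id.mono_left nhdsWithin_le_nhds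
  set v : ℂ → ℂ := fun w => log (gruenwaldRatio w) * a
  have hv : (fun w => v w + a * w / 2) =O[𝓝[≠] 0] (· ^ 2) :=
    (log_gruenwaldRatio_add_isBigO.const_mul_left a).congr_left fun w => by ring
  have hshift (c : ℂ) : (fun w => c * w + v w) =O[𝓝[≠] 0] fun w => w := by
    refine ((hv.trans ((isLittleO_pow_id one_lt_two).isBigO.mono nhdsWithin_le_nhds)).add
      ((isBigO_refl (fun w : ℂ => w) _).const_mul_left (c - a / 2))).congr_left fun w => ?_
    ring
  refine ((((hshift p).exp_sub_one_sub hid).const_mul_left l₁).add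
    (((hshift q).exp_sub_one_sub hid).const_mul_left l₂) |>.add hv).congr' ?_
    (Eventually.of_forall fun w => by ring)
  filter_upwards [tendsto_gruenwaldRatio.eventually_ne one_ne_zero] with w hw
  simp only [v, cpow_def_of_ne_zero hw, exp_add]
  linear_combination -(1 + log (gruenwaldRatio w) * a) * hsum - w * hmom

theorem Real.rpow_le_rpow_sub_mul_rpow {δ x s b : ℝ} (hδ : 0 < δ) (hx : δ ≤ x) (hs : s ≤ b) :
    x ^ s ≤ δ ^ (s - b) * x ^ b := by
  calc x ^ s = x ^ (s - b) * x ^ b := by rw [← Real.rpow_add (hδ.trans_le hx), sub_add_cancel]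
    _ ≤ δ ^ (s - b) * x ^ b := mul_le_mul_of_nonneg_right
      (Real.rpow_le_rpow_of_nonpos hδ hx (by linarith)) (Real.rpow_nonneg (hδ.le.trans hx) b)

theorem exists_forall_norm_le_mul_abs_rpow {E : Type*} [SeminormedAddCommGroup E] {f : ℝ → E}
    {a b M K : ℝ} (hnear : f =O[𝓝 0] fun x => |x| ^ b) (hfar : ∀ x, ‖f x‖ ≤ M + K * |x| ^ a)
    (hab : a ≤ b) (hb : 0 ≤ b) : ∃ C > 0, ∀ x, ‖f x‖ ≤ C * |x| ^ b := by
  obtain ⟨c, hc⟩ := hnear.bound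
  obtain ⟨δ, hδ, hball⟩ := Metric.eventually_nhds_iff.mp hc
  refine ⟨max c 0 + |M| * δ ^ (0 - b) + |K| * δ ^ (a - b) + 1, by positivity, fun x => ?_⟩
  have hxb : 0 ≤ |x| ^ b := by positivity
  have hδM : 0 ≤ |M| * δ ^ (0 - b) := by positivity
  have hδK : 0 ≤ |K| * δ ^ (a - b) := by positivity
  rcases lt_or_ge |x| δ with hx | hx
  · have := hball (show dist x 0 < δ by simpa using hx)
    rw [Real.norm_of_nonneg hxb] at this
    nlinarith [le_max_left c 0]
  · have h0 := Real.rpow_le_rpow_sub_mul_rpow hδ hx hb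
    have ha := Real.rpow_le_rpow_sub_mul_rpow hδ hx hab
    rw [Real.rpow_zero] at h0
    have hxa : 0 ≤ |x| ^ a := by positivity
    nlinarith [hfar x, le_abs_self M, le_abs_self K, abs_nonneg M, abs_nonneg K, le_max_right c 0]

noncomputable def wsgdSymbolError (α : ℝ) (l₁ l₂ : ℂ) (p q θ : ℝ) : ℂ :=
  l₁ * (1 - exp (-(θ * I))) ^ (α : ℂ) * exp (p * θ * I)
    + l₂ * (1 - exp (-(θ * I))) ^ (α : ℂ) * exp (q * θ * I) - (θ * I) ^ (α : ℂ)

theorem wsgdSymbolError_eq_mul {α : ℝ} {l₁ l₂ : ℂ} {p q θ : ℝ} (hθ : θ ≠ 0)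
    (hr : 0 < (gruenwaldRatio (θ * I)).re) :
    wsgdSymbolError α l₁ l₂ p q θ = (θ * I) ^ (α : ℂ) *
      ((l₁ * exp (p * (θ * I)) + l₂ * exp (q * (θ * I))) * gruenwaldRatio (θ * I) ^ (α : ℂ)
        - 1) := by
  have hw : (θ : ℂ) * I ≠ 0 := mul_ne_zero (ofReal_ne_zero.mpr hθ) I_ne_zero
  have hz : 1 - exp (-(θ * I)) = (θ * I) * gruenwaldRatio (θ * I) := (mul_div_cancel₀ _ hw).symm
  rw [wsgdSymbolError, hz, mul_cpow_of_re_nonneg_of_re_pos (by simp) hr, mul_assoc (p : ℂ),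
    mul_assoc (q : ℂ)]
  ring

theorem wsgdSymbolError_isBigO {α : ℝ} (hα : α ≠ 0) {l₁ l₂ : ℂ} {p q : ℝ} (hsum : l₁ + l₂ = 1)
    (hmom : l₁ * p + l₂ * q = α / 2) :
    wsgdSymbolError α l₁ l₂ p q =O[𝓝 0] fun θ => |θ| ^ (α + 2) := by
  have h0 : wsgdSymbolError α l₁ l₂ p q 0 = 0 := by
    simp [wsgdSymbolError, zero_cpow (ofReal_ne_zero.mpr hα)]
  rw [← nhdsNE_sup_pure, isBigO_sup]
  refine ⟨?_, isBigO_pure.mpr fun _ => h0⟩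
  have hw : Tendsto (fun θ : ℝ => (θ : ℂ) * I) (𝓝[≠] 0) (𝓝[≠] 0) := by
    refine tendsto_nhdsWithin_iff.mpr ⟨?_, ?_⟩
    · exact ((continuous_ofReal.mul continuous_const).tendsto' 0 0 (by simp)).mono_left
        nhdsWithin_le_nhds
    · filter_upwards [self_mem_nhdsWithin] with θ (hθ : θ ≠ 0)
      exact mul_ne_zero (ofReal_ne_zero.mpr hθ) I_ne_zero
  have hS :=
    ((weighted_gruenwald_symbol_sub_one_isBigO (a := α) hsum hmom).comp_tendsto hw).norm_right
  have hpow : (fun θ : ℝ => ((θ : ℂ) * I) ^ (α : ℂ)) =O[𝓝[≠] 0] fun θ => |θ| ^ α :=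
    isBigO_of_le _ fun θ => by simpa [norm_cpow_real] using le_abs_self (|θ| ^ α)
  have hr : ∀ᶠ θ : ℝ in 𝓝[≠] 0, 0 < (gruenwaldRatio (θ * I)).re :=
    ((continuous_re.tendsto 1).comp (tendsto_gruenwaldRatio.comp hw)).eventually_const_lt
      (by simp)
  refine (hpow.mul hS).congr' ?_ ?_
  · filter_upwards [self_mem_nhdsWithin, hr] with θ hθ hr
    exact (wsgdSymbolError_eq_mul hθ hr).symm
  · filter_upwards [self_mem_nhdsWithin] with θ (hθ : θ ≠ 0)
    simp [Real.rpow_add (abs_pos.mpr hθ)]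

theorem norm_wsgdSymbolError_le {α : ℝ} (hα : 0 ≤ α) (l₁ l₂ : ℂ) (p q θ : ℝ) :
    ‖wsgdSymbolError α l₁ l₂ p q θ‖ ≤ (‖l₁‖ + ‖l₂‖) * 2 ^ α + |θ| ^ α := by
  have he (c : ℝ) : ‖exp (c * θ * I)‖ = 1 := by rw [← ofReal_mul]; exact norm_exp_ofReal_mul_I _
  have hz : ‖(1 - exp (-(θ * I))) ^ (α : ℂ)‖ ≤ 2 ^ α := by
    rw [norm_cpow_real]
    refine Real.rpow_le_rpow (norm_nonneg _) ((norm_sub_le _ _).trans ?_) hα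
    rw [← neg_mul, ← ofReal_neg, norm_exp_ofReal_mul_I]
    norm_num
  refine (norm_sub_le _ _).trans (add_le_add ((norm_add_le _ _).trans ?_) ?_)
  · rw [norm_mul, norm_mul, norm_mul, norm_mul, he, he, mul_one, mul_one, add_mul]
    gcongr
  · simp [norm_cpow_real]

theorem WSGD_second_order_multiplier (α : ℝ) (hα : 0 < α) (p q : ℤ) (hpq : p ≠ q)
    (l1 l2 : ℝ)
    (hl1 : l1 = (α - 2 * (q : ℝ)) / (2 * ((p : ℝ) - (q : ℝ))))
    (hl2 : l2 = (2 * (p : ℝ) - α) / (2 * ((p : ℝ) - (q : ℝ)))) :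
    ∃ C > (0 : ℝ), ∀ θ : ℝ,
      ‖(l1 : ℂ) * (1 - Complex.exp (-((θ : ℂ) * Complex.I))) ^ (α : ℂ)
            * Complex.exp ((p : ℂ) * (θ : ℂ) * Complex.I)
          + (l2 : ℂ) * (1 - Complex.exp (-((θ : ℂ) * Complex.I))) ^ (α : ℂ)
            * Complex.exp ((q : ℂ) * (θ : ℂ) * Complex.I)
          - ((θ : ℂ) * Complex.I) ^ (α : ℂ)‖
        ≤ C * |θ| ^ (α + 2) := by
  have hpq' : (p : ℝ) - q ≠ 0 := sub_ne_zero.mpr (Int.cast_injective.ne hpq)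
  have hsum : (l1 : ℂ) + l2 = 1 := by
    norm_cast; rw [hl1, hl2]; field_simp; ring
  have hmom : (l1 : ℂ) * (p : ℝ) + l2 * (q : ℝ) = α / 2 := by
    norm_cast; rw [hl1, hl2]; field_simp; ring
  obtain ⟨C, hC, hbound⟩ := exists_forall_norm_le_mul_abs_rpow
    (K := 1) (a := α) (wsgdSymbolError_isBigO hα.ne' hsum hmom)
    (fun θ => (norm_wsgdSymbolError_le hα.le _ _ _ _ θ).trans_eq (by rw [one_mul]))
    (by linarith) (by linarith)
  refine ⟨C, hC, fun θ => ?_⟩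
  simpa only [wsgdSymbolError, ofReal_intCast] using hbound θ
end

section
/- Let 1 ≤ α ≤ 2 and let w_k be the WSGD weights for (p,q)=(1,0). Then for every x ∈ [0, π], Σ_{k=0}^∞ w_k cos((k-1)x) = (2 sin(x/2))^α · [ (α/2) cos( (α/2)(x-π) - x ) + ((2-α)/2) cos( (α/2)(x-π) ) ]. -/
/-! By the binomial series, `∑ gₖ zᵏ = (1 - z) ^ α` on the open unit disc. For `α > 0` the
coefficients are absolutely summable (Raabe: once `k ≥ α`, `k |gₖ|` decreases by exactly `α |gₖ|`
at each step), so both sides are continuous on the closed disc and the identity persists at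
`z = e^{-ix}`. The weights `wₖ` are the coefficients of `(α/2 + (2-α)/2 · z) (1 - z) ^ α`;
multiplying by `e^{ix}` and taking real parts yields the cosine series, and the polar form
`1 - e^{-ix} = 2 sin (x/2) · e^{i(π-x)/2}`, whose argument lies in `[0, π/2]`, evaluates the power. -/

/-- Grünwald coefficients `g_k = (-1)^k * binom(α, k)`. -/
noncomputable def gru (α : ℝ) (k : ℕ) : ℝ :=
  (-1 : ℝ) ^ k * (∏ i ∈ Finset.range k, (α - (i : ℝ))) / (Nat.factorial k : ℝ)

/-- WSGD weights for `(p,q) = (1,0)`. -/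
noncomputable def w10 (α : ℝ) : ℕ → ℝ
  | 0 => α / 2 * gru α 0
  | k + 1 => α / 2 * gru α (k + 1) + (2 - α) / 2 * gru α k

/-- WSGD weights for `(p,q) = (1,-1)`. -/
noncomputable def w1m1 (α : ℝ) : ℕ → ℝ
  | 0 => (2 + α) / 4 * gru α 0
  | 1 => (2 + α) / 4 * gru α 1
  | k + 2 => (2 + α) / 4 * gru α (k + 2) + (2 - α) / 4 * gru α k

open Metric Set Finset Complex

lemma gru_eq_neg_one_pow_mul_choose (α : ℝ) (k : ℕ) :
    gru α k = (-1) ^ k * Ring.choose α k := by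
  have hsmeval : (descPochhammer ℤ k).smeval α = ∏ i ∈ range k, (α - i) := by
    rw [← descPochhammer_eval_eq_prod_range, ← descPochhammer_map (Int.castRingHom ℝ),
      Polynomial.eval_map, ← Polynomial.eval₂_smulOneHom_eq_smeval]
    congr 1
    exact RingHom.ext_int _ _
  rw [gru, Ring.choose_eq_smul, smul_eq_mul, hsmeval]
  ring

lemma gru_zero (α : ℝ) : gru α 0 = 1 := by simp [gru]

lemma gru_succ (α : ℝ) (k : ℕ) :
    gru α (k + 1) = gru α k * ((k - α) / (k + 1)) := by
  simp only [gru, prod_range_succ, Nat.factorial_succ, pow_succ, Nat.cast_mul, Nat.cast_add,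
    Nat.cast_one]
  field_simp
  ring

lemma mul_abs_gru_succ {α : ℝ} {k : ℕ} (h : α ≤ k) :
    (k + 1) * |gru α (k + 1)| = (k - α) * |gru α k| := by
  have hk : (0 : ℝ) < k + 1 := k.cast_add_one_pos
  rw [gru_succ, abs_mul, abs_div, abs_of_nonneg (sub_nonneg.2 h), abs_of_pos hk]
  field_simp

lemma summable_abs_gru {α : ℝ} (hα : 0 < α) : Summable fun k ↦ |gru α k| := by
  obtain ⟨N, hN⟩ := exists_nat_ge α
  set a : ℕ → ℝ := fun k ↦ (k + N : ℕ) * |gru α (k + N)|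
  have htelescope : ∀ k, α * |gru α (k + N)| = a k - a (k + 1) := by
    intro k
    have hk : α ≤ ((k + N : ℕ) : ℝ) := hN.trans (by exact_mod_cast Nat.le_add_left N k)
    simp only [a, Nat.add_right_comm k 1 N, Nat.cast_succ, mul_abs_gru_succ hk]
    ring
  refine (summable_nat_add_iff N).1 (summable_of_sum_range_le (c := a 0 / α)
    (fun _ ↦ abs_nonneg _) fun n ↦ ?_)
  rw [le_div_iff₀ hα, mul_comm, mul_sum]
  simp only [htelescope, sum_range_sub']
  have : 0 ≤ a n := by positivity
  linarith

lemma hasSum_gru_mul_pow_of_norm_lt_one (α : ℝ) {z : ℂ} (hz : ‖z‖ < 1) :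
    HasSum (fun k ↦ (gru α k : ℂ) * z ^ k) ((1 - z) ^ (α : ℂ)) := by
  have h := one_add_cpow_hasFPowerSeriesOnBall_zero (a := (α : ℂ)).hasSum (y := -z)
    (by rw [mem_eball_zero_iff, enorm_neg, ← ofReal_norm]; exact ENNReal.ofReal_lt_one.2 hz)
  simp only [binomialSeries, FormalMultilinearSeries.ofScalars_apply_eq, smul_eq_mul,
    zero_sub, ← sub_eq_add_neg] at h
  refine h.congr_fun fun k ↦ ?_
  rw [gru_eq_neg_one_pow_mul_choose, neg_pow]
  push_cast
  ring

lemma hasSum_gru_mul_pow_of_norm_le_one {α : ℝ} (hα : 0 < α) {z : ℂ} (hz : ‖z‖ ≤ 1) :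
    HasSum (fun k ↦ (gru α k : ℂ) * z ^ k) ((1 - z) ^ (α : ℂ)) := by
  have hbound : ∀ k, ∀ w ∈ closedBall (0 : ℂ) 1, ‖(gru α k : ℂ) * w ^ k‖ ≤ |gru α k| := by
    intro k w hw
    rw [norm_mul, norm_pow, norm_real, Real.norm_eq_abs]
    exact mul_le_of_le_one_right (abs_nonneg _)
      (pow_le_one₀ (norm_nonneg w) (mem_closedBall_zero_iff.1 hw))
  have hz' : z ∈ closedBall (0 : ℂ) 1 := mem_closedBall_zero_iff.2 hz
  have heq : EqOn (fun w ↦ ∑' k, (gru α k : ℂ) * w ^ k) (fun w ↦ (1 - w) ^ (α : ℂ))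
      (closedBall 0 1) := by
    refine EqOn.of_subset_closure
      (fun w hw ↦ (hasSum_gru_mul_pow_of_norm_lt_one α (mem_ball_zero_iff.1 hw)).tsum_eq)
      (continuousOn_tsum (fun k ↦ by fun_prop) (summable_abs_gru hα) hbound) ?_
      ball_subset_closedBall (closure_ball 0 one_ne_zero).ge
    intro w hw
    have hre : 0 ≤ (1 - w).re := by
      have := (re_le_norm w).trans (mem_closedBall_zero_iff.1 hw)
      simp only [sub_re, one_re]
      linarith
    exact ((continuousAt_cpow_const_of_re_pos (Or.inl hre) (by simpa using hα)).comp
      (continuous_sub_left 1).continuousAt).continuousWithinAt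
  rw [← show ∑' k, (gru α k : ℂ) * z ^ k = (1 - z) ^ (α : ℂ) from heq hz']
  exact (Summable.of_norm_bounded (summable_abs_gru hα) fun k ↦ hbound k z hz').hasSum

lemma hasSum_w10_mul_pow {α : ℝ} {z L : ℂ} (h : HasSum (fun k ↦ (gru α k : ℂ) * z ^ k) L) :
    HasSum (fun k ↦ (w10 α k : ℂ) * z ^ k) ((α / 2 + (2 - α) / 2 * z) * L) := by
  have hsplit := ((hasSum_nat_add_iff' 1).2 h |>.mul_left (α / 2 : ℂ)).add
    (h.mul_left ((2 - α) / 2 * z))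
  have hw0 : w10 α 0 = α / 2 := by simp [w10, gru_zero]
  rw [← hasSum_nat_add_iff' 1, sum_range_one, pow_zero, mul_one, hw0,
    show (α / 2 + (2 - α) / 2 * z) * L - (α / 2 : ℝ) = α / 2 * (L - 1) + (2 - α) / 2 * z * L by
      push_cast; ring]
  simp only [sum_range_one, pow_zero, mul_one, gru_zero, ofReal_one] at hsplit
  refine hsplit.congr_fun fun k ↦ ?_
  simp only [w10]
  push_cast
  ring

lemma one_sub_exp_neg_mul_I (x : ℝ) :
    1 - exp (-(x * I)) = (2 * Real.sin (x / 2) : ℝ) * exp ((Real.pi - x) / 2 * I) := by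
  have hexp : exp ((Real.pi - x) / 2 * I) = I * exp (-(x / 2) * I) := by
    rw [show (Real.pi - x) / 2 * I = Real.pi / 2 * I + -(x / 2) * I by ring, exp_add,
      exp_pi_div_two_mul_I]
  have hsq : exp (-(x * I)) = exp (-(x / 2) * I) ^ 2 := by
    rw [← exp_nat_mul]; ring_nf
  have hinv : exp (x / 2 * I) * exp (-(x / 2) * I) = 1 := by
    rw [← exp_add]; ring_nf; exact exp_zero
  push_cast
  rw [hexp, hsq, Complex.sin]
  linear_combination (exp (-(x / 2) * I) * exp (x / 2 * I) - exp (-(x / 2) * I) ^ 2) * I_sq - hinv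

lemma ofReal_mul_exp_mul_I_cpow {r θ a : ℝ} (hr : 0 ≤ r) (hθ₁ : -Real.pi < θ)
    (hθ₂ : θ ≤ Real.pi) (ha : a ≠ 0) :
    ((r : ℂ) * exp (θ * I)) ^ (a : ℂ) = (r ^ a : ℝ) * exp ((a * θ : ℝ) * I) := by
  rcases hr.eq_or_lt with rfl | hr
  · simp [zero_cpow (ofReal_ne_zero.2 ha), Real.zero_rpow ha]
  rw [cpow_def_of_ne_zero (mul_ne_zero (ofReal_ne_zero.2 hr.ne') (exp_ne_zero _)),
    log_ofReal_mul hr (exp_ne_zero _), log_exp (by simpa using hθ₁) (by simpa using hθ₂),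
    ofReal_cpow hr.le, cpow_def_of_ne_zero (ofReal_ne_zero.2 hr.ne'), ← exp_add, ofReal_log hr.le]
  congr 1
  push_cast
  ring

lemma one_sub_exp_neg_mul_I_cpow {x a : ℝ} (hx₀ : 0 ≤ x) (hx₁ : x ≤ 2 * Real.pi) (ha : a ≠ 0) :
    (1 - exp (-(x * I))) ^ (a : ℂ)
      = ((2 * Real.sin (x / 2)) ^ a : ℝ) * exp ((a * ((Real.pi - x) / 2) : ℝ) * I) := by
  have hsin : 0 ≤ 2 * Real.sin (x / 2) := by
    have := Real.sin_nonneg_of_nonneg_of_le_pi (x := x / 2) (by linarith) (by linarith)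
    linarith
  rw [one_sub_exp_neg_mul_I]
  exact_mod_cast ofReal_mul_exp_mul_I_cpow (θ := (Real.pi - x) / 2) hsin
    (by linarith [Real.pi_pos]) (by linarith [Real.pi_pos]) ha

lemma re_exp_mul_I_mul_w10_symbol (α x r ψ : ℝ) :
    (exp (x * I) * ((α / 2 + (2 - α) / 2 * exp (-(x * I))) * ((r : ℂ) * exp (ψ * I)))).re
      = r * (α / 2 * Real.cos (x + ψ) + (2 - α) / 2 * Real.cos ψ) := by
  have hinv : exp (x * I) * exp (-(x * I)) = 1 := by rw [← exp_add, add_neg_cancel, exp_zero]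
  have hsplit : exp (x * I) * ((α / 2 + (2 - α) / 2 * exp (-(x * I))) * ((r : ℂ) * exp (ψ * I)))
      = (r * (α / 2) : ℝ) * exp ((x + ψ : ℝ) * I) + (r * ((2 - α) / 2) : ℝ) * exp (ψ * I) := by
    push_cast
    rw [add_mul _ _ I, exp_add]
    linear_combination (r * ((2 - α) / 2) * exp (ψ * I) : ℂ) * hinv
  rw [hsplit, add_re, re_ofReal_mul, re_ofReal_mul, exp_ofReal_mul_I_re, exp_ofReal_mul_I_re]
  ring

theorem w10_generating_function_general (α : ℝ) (hα1 : 1 ≤ α)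
    (x : ℝ) (hx0 : 0 ≤ x) (hxpi : x ≤ Real.pi) :
    HasSum (fun k : ℕ => w10 α k * Real.cos (((k : ℝ) - 1) * x))
      ((2 * Real.sin (x / 2)) ^ α *
        (α / 2 * Real.cos (α / 2 * (x - Real.pi) - x)
          + (2 - α) / 2 * Real.cos (α / 2 * (x - Real.pi)))) := by
  have hα : 0 < α := by linarith
  have hz : ‖exp (-(x * I))‖ = 1 := by simpa [neg_mul] using norm_exp_ofReal_mul_I (-x)
  have H := hasSum_re <| (hasSum_w10_mul_pow
    (hasSum_gru_mul_pow_of_norm_le_one hα hz.le)).mul_left (exp (x * I))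
  rw [one_sub_exp_neg_mul_I_cpow hx0 (by linarith [Real.pi_pos]) hα.ne',
    re_exp_mul_I_mul_w10_symbol] at H
  convert H.congr_fun fun k ↦ ?_ using 2
  · rw [← Real.cos_neg, ← Real.cos_neg (α * _)]
    ring_nf
  · rw [mul_left_comm, ← exp_nat_mul, ← exp_add, re_ofReal_mul,
      show (x : ℂ) * I + k * -(x * I) = (-((k - 1) * x) : ℝ) * I by push_cast; ring,
      exp_ofReal_mul_I_re, Real.cos_neg]

theorem w10_generating_function (α : ℝ) (hα1 : 1 ≤ α) (hα2 : α ≤ 2)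
    (x : ℝ) (hx0 : 0 ≤ x) (hxpi : x ≤ Real.pi) :
    HasSum (fun k : ℕ => w10 α k * Real.cos (((k : ℝ) - 1) * x))
      ((2 * Real.sin (x / 2)) ^ α *
        (α / 2 * Real.cos (α / 2 * (x - Real.pi) - x)
          + (2 - α) / 2 * Real.cos (α / 2 * (x - Real.pi)))) :=
  w10_generating_function_general α hα1 x hx0 hxpi
end
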